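/- arXiv:2501.05553 — 3 statements merged into one kernel-verified Lean document; each statement's English description precedes it below -/
import Mathlib

section
/- Let Σ be a root system in a finite-dimensional real inner product space V with a fixed set of simple roots Λ = {α₁,…,α_r}. If α, β ∈ Σ⁺ are positive roots with α ≼ β (meaning every coefficient of α in the simple-root expansion is ≤ the corresponding coefficient of β) and height(β) − height(α) > 1, then there exists a positive root γ ∈ Σ⁺ with γ ≠ α, γ ≠ β, and α ≼ γ ≼ β. -/
open scoped RealInnerProductSpace

/-- **Intermediate root lemma.** If `a ≼ b` are positive roots of a root system with
`height b − height a > 1`, there is a positive root `γ` strictly between them. -/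
theorem stmt0 {V : Type*} [NormedAddCommGroup V] [InnerProductSpace ℝ V]
    [FiniteDimensional ℝ V]
    (Sigma : Set V) (hfin : Sigma.Finite) (hne : ∀ β ∈ Sigma, β ≠ (0 : V))
    (hneg : ∀ β ∈ Sigma, -β ∈ Sigma)
    (hsub : ∀ β ∈ Sigma, ∀ γ ∈ Sigma, 0 < ⟪β, γ⟫ → β - γ = 0 ∨ β - γ ∈ Sigma)
    (hadd : ∀ β ∈ Sigma, ∀ γ ∈ Sigma, ⟪β, γ⟫ < 0 → β + γ = 0 ∨ β + γ ∈ Sigma)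
    (r : ℕ) (α : Fin r → V) (hα : ∀ i, α i ∈ Sigma)
    (hindep : LinearIndependent ℝ α)
    (c : V → Fin r → ℤ)
    (hc : ∀ β ∈ Sigma, β = ∑ i, (c β i : ℝ) • α i)
    (Pos : Set V) (hPos : Pos = {β ∈ Sigma | ∀ i, 0 ≤ c β i})
    (a b : V) (ha : a ∈ Pos) (hb : b ∈ Pos)
    (hle : ∀ i, c a i ≤ c b i)
    (hgap : 1 < (∑ i, c b i) - (∑ i, c a i)) :
    ∃ γ ∈ Pos, γ ≠ a ∧ γ ≠ b ∧ (∀ i, c a i ≤ c γ i) ∧ (∀ i, c γ i ≤ c b i) := by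
  subst hPos
  obtain ⟨haS, hapos⟩ := ha
  obtain ⟨hbS, hbpos⟩ := hb
  -- coefficients are unique
  have key : ∀ β ∈ Sigma, ∀ m : Fin r → ℤ, β = ∑ j, (m j : ℝ) • α j →
      ∀ j, c β j = m j := by
    intro β hβ m hm j
    have h0 : ∑ j, ((c β j : ℝ) - (m j : ℝ)) • α j = 0 := by
      simp only [sub_smul, Finset.sum_sub_distrib]
      rw [← hc β hβ, ← hm, sub_self]
    have h1 := (Fintype.linearIndependent_iff.mp hindep) _ h0 j
    have h2 : (c β j : ℝ) = (m j : ℝ) := by linarith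
    exact_mod_cast h2
  -- the difference vector
  set k : Fin r → ℤ := fun i => c b i - c a i with hk
  have hd : b - a = ∑ j, ((k j : ℝ)) • α j := by
    simp only [hk]
    push_cast
    simp only [sub_smul, Finset.sum_sub_distrib]
    rw [← hc b hbS, ← hc a haS]
  have hd0 : b - a ≠ 0 := by
    intro h
    have hba : b = a := sub_eq_zero.mp h
    have : ∑ i, c b i = ∑ i, c a i := by rw [hba]
    omega
  have hdd : 0 < ⟪b - a, b - a⟫ :=
    lt_of_le_of_ne real_inner_self_nonneg
      (Ne.symm fun h => hd0 (inner_self_eq_zero.mp h))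
  have hsum : ⟪b - a, b - a⟫ = ∑ j, (k j : ℝ) * ⟪α j, b - a⟫ := by
    nth_rewrite 1 [hd]
    rw [sum_inner]
    exact Finset.sum_congr rfl fun j _ => real_inner_smul_left _ _ _
  -- find a good simple root
  have hex : ∃ i, 0 < k i ∧ 0 < ⟪α i, b - a⟫ := by
    by_contra hno
    push_neg at hno
    have : ∑ j, (k j : ℝ) * ⟪α j, b - a⟫ ≤ 0 := by
      apply Finset.sum_nonpos
      intro j _
      have hkj : 0 ≤ k j := by simp [hk]; exact hle j
      rcases lt_or_eq_of_le hkj with h | h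
      · have := hno j h
        exact mul_nonpos_of_nonneg_of_nonpos (by exact_mod_cast hkj) this
      · simp [← h]
    rw [hsum] at hdd
    linarith
  obtain ⟨i, hki, hipos⟩ := hex
  rw [inner_sub_right] at hipos
  by_cases hcase : 0 < ⟪α i, b⟫
  · -- use γ = b - α i
    have hres := hsub b hbS (α i) (hα i) (by rwa [real_inner_comm])
    rcases hres with h0 | hγS
    · exfalso
      have hbi : b = α i := sub_eq_zero.mp h0
      have hcb : ∀ j, c b j = if j = i then 1 else 0 := by
        apply key b hbS
        rw [hbi]
        simp [apply_ite (fun z : ℤ => (z : ℝ)), ite_smul]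
      have hs : ∑ j, c b j = 1 := by
        simp [hcb]
      have : 0 ≤ ∑ j, c a j := Finset.sum_nonneg fun j _ => hapos j
      omega
    have hcγ : ∀ j, c (b - α i) j = c b j - (if j = i then 1 else 0) := by
      apply key _ hγS
      push_cast [apply_ite (fun z : ℤ => (z : ℝ))]
      simp only [sub_smul, Finset.sum_sub_distrib, ite_smul, one_smul, zero_smul]
      rw [← hc b hbS]
      simp
    have hcbi : c a i < c b i := by simp only [hk] at hki; omega
    refine ⟨b - α i, ⟨hγS, ?_⟩, ?_, ?_, ?_, ?_⟩
    · intro j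
      rw [hcγ j]
      by_cases hj : j = i
      · subst hj; simp only [if_pos rfl]; have := hapos j; omega
      · simp only [if_neg hj, sub_zero]; exact le_trans (hapos j) (hle j)
    · intro h
      have hsγ : ∑ j, c (b - α i) j = (∑ j, c b j) - 1 := by
        rw [Finset.sum_congr rfl fun j _ => hcγ j]
        rw [Finset.sum_sub_distrib]
        simp
      rw [h] at hsγ
      omega
    · intro h
      exact hne (α i) (hα i) (by simpa using sub_eq_self.mp h)
    · intro j
      rw [hcγ j]
      by_cases hj : j = i
      · subst hj; simp only [if_pos rfl]; omega
      · simp only [if_neg hj, sub_zero]; exact hle j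
    · intro j
      rw [hcγ j]
      by_cases hj : j = i <;> simp [hj]
  · -- use γ = a + α i
    have hai : ⟪α i, a⟫ < 0 := by push_neg at hcase; linarith
    have hres := hadd a haS (α i) (hα i) (by rwa [real_inner_comm])
    rcases hres with h0 | hγS
    · exfalso
      have hai' : a = -α i := eq_neg_of_add_eq_zero_left h0
      have hca : ∀ j, c a j = if j = i then -1 else 0 := by
        apply key a haS
        rw [hai']
        simp [apply_ite (fun z : ℤ => (z : ℝ)), ite_smul]
      have := hapos i
      rw [hca i] at this
      simp at this
    have hcγ : ∀ j, c (a + α i) j = c a j + (if j = i then 1 else 0) := by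
      apply key _ hγS
      push_cast [apply_ite (fun z : ℤ => (z : ℝ))]
      simp only [add_smul, Finset.sum_add_distrib, ite_smul, one_smul, zero_smul]
      rw [← hc a haS]
      simp
    have hcbi : c a i < c b i := by simp only [hk] at hki; omega
    refine ⟨a + α i, ⟨hγS, ?_⟩, ?_, ?_, ?_, ?_⟩
    · intro j
      rw [hcγ j]
      by_cases hj : j = i
      · subst hj; have := hapos j; simp only [if_pos rfl]; omega
      · simp only [if_neg hj, add_zero]; exact hapos j
    · intro h
      exact hne (α i) (hα i) (by simpa using add_eq_left.mp h)
    · intro h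
      have hsγ : ∑ j, c (a + α i) j = (∑ j, c a j) + 1 := by
        rw [Finset.sum_congr rfl fun j _ => hcγ j]
        rw [Finset.sum_add_distrib]
        simp
      rw [h] at hsγ
      omega
    · intro j
      rw [hcγ j]
      by_cases hj : j = i <;> simp [hj]
    · intro j
      rw [hcγ j]
      by_cases hj : j = i
      · subst hj; simp only [if_pos rfl]; omega
      · simp only [if_neg hj, add_zero]; exact hle j
end

section
/- Let 𝔤 = 𝔨 ⊕ 𝔞 ⊕ 𝔫 be an Iwasawa decomposition of a real semisimple Lie algebra with restricted root space decomposition 𝔤 = 𝔤₀ ⊕ ⨁_{α∈Σ} 𝔤_α, and let 𝔱₀ ⊆ 𝔨₀ = Z_𝔨(𝔞) be a subspace. Suppose 𝔰 ⊆ 𝔤 is a Lie subalgebra contained in 𝔱₀ ⊕ 𝔞 ⊕ 𝔫 that projects surjectively onto 𝔞 ⊕ 𝔫 along 𝔨. Then 𝔰 contains 𝔫. -/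
/-!
Fix `H ∈ 𝔞` with `α(H) = 1` and lift it to `Y₁ + H ∈ 𝔰` with `Y₁ ∈ 𝔱₀`. Lifting `Z ∈ 𝔤_α` to
`Y₂ + Z ∈ 𝔰` as well, the bracket `⁅Y₁ + H, Y₂ + Z⁆` equals `Z + ⁅Y₁, Z⁆`, so `𝔰` contains the image
of `𝔤_α` under `1 + ad Y₁`. Since `ad Y₁` is skew-adjoint for the positive definite form `B_θ`, it
has no eigenvalue `-1`; hence `1 + ad Y₁` is bijective on the finite-dimensional space `𝔤_α`.
-/

namespace LinearMap

variable {𝕜 M : Type*} [Field 𝕜] [LinearOrder 𝕜] [IsStrictOrderedRing 𝕜]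
  [AddCommGroup M] [Module 𝕜 M] {B : M →ₗ[𝕜] M →ₗ[𝕜] 𝕜}

theorem IsSkewAdjoint.eq_zero_of_apply_eq_smul (hB : ∀ x, x ≠ 0 → 0 < B x x) {f : M → M}
    (hf : IsSkewAdjoint B f) {c : 𝕜} (hc : c ≠ 0) {v : M} (hv : f v = c • v) : v = 0 := by
  by_contra hv0
  have hskew : c * B v v = -(c * B v v) := by
    simpa [hv] using hf v v
  have : c * B v v = 0 := by linarith
  exact (mul_ne_zero hc (hB v hv0).ne') this

theorem IsSkewAdjoint.exists_add_apply_eq (hB : ∀ x, x ≠ 0 → 0 < B x x) {f : Module.End 𝕜 M}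
    (hf : IsSkewAdjoint B f) {W : Submodule 𝕜 M} [FiniteDimensional 𝕜 W]
    (hW : ∀ v ∈ W, f v ∈ W) {w : M} (hw : w ∈ W) : ∃ v ∈ W, v + f v = w := by
  let T : Module.End 𝕜 W := (1 + f).restrict fun v hv => W.add_mem hv (hW v hv)
  have hT : Function.Injective T := by
    rw [← LinearMap.ker_eq_bot, LinearMap.ker_eq_bot']
    intro v hv
    have hfv : f v = (-1 : 𝕜) • (v : M) := by
      have := congrArg Subtype.val hv
      simp only [T, coe_restrict_apply, add_apply, Module.End.one_apply,
        ZeroMemClass.coe_zero] at this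
      rw [neg_one_smul, eq_neg_of_add_eq_zero_right this]
    exact Subtype.ext (hf.eq_zero_of_apply_eq_smul hB (by norm_num) hfv)
  obtain ⟨v, hv⟩ := LinearMap.injective_iff_surjective.mp hT ⟨w, hw⟩
  exact ⟨v, v.2, by simpa [T] using congrArg Subtype.val hv⟩

end LinearMap

theorem LieSubalgebra.add_lie_mem_of_lie_eq_self {R L : Type*} [CommRing R] [LieRing L]
    [LieAlgebra R L] (s : LieSubalgebra R L) {Y₁ Y₂ H Z : L} (hY : ⁅Y₁, Y₂⁆ = 0)
    (hYH : ⁅Y₂, H⁆ = 0) (hHZ : ⁅H, Z⁆ = Z) (h₁ : Y₁ + H ∈ s) (h₂ : Y₂ + Z ∈ s) :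
    Z + ⁅Y₁, Z⁆ ∈ s := by
  have hbr : ⁅Y₁ + H, Y₂ + Z⁆ = Z + ⁅Y₁, Z⁆ := by
    rw [add_lie, lie_add, lie_add, hY, ← lie_skew H Y₂, hYH, hHZ]
    abel
  exact hbr ▸ s.lie_mem h₁ h₂

theorem stmt6_general {L : Type*} [LieRing L] [LieAlgebra ℝ L] [Module.Finite ℝ L]
    -- the inner product `B_θ`
    (B : L →ₗ[ℝ] L →ₗ[ℝ] ℝ)
    (hBpos : ∀ X : L, X ≠ 0 → 0 < B X X)
    (a t₀ : Submodule ℝ L)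
    {ι : Type*} (g : ι → Submodule ℝ L)
    -- the positive restricted roots and root spaces
    (lam : ι → (↥a →ₗ[ℝ] ℝ))
    (hroot : ∀ i, ∀ H : ↥a, ∀ Z ∈ g i, ⁅(H : L), Z⁆ = lam i H • Z)
    (hlam1 : ∀ i, ∃ H : ↥a, lam i H = 1)
    -- `𝔱₀ ⊆ 𝔨₀ = Z_𝔨(𝔞)`: abelian, commutes with `𝔞`, preserves each root space,
    -- and acts skew-symmetrically with respect to `B_θ`
    (ht₀a : ∀ Y ∈ t₀, ∀ H ∈ a, ⁅Y, H⁆ = 0)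
    (ht₀ab : ∀ Y ∈ t₀, ∀ Y' ∈ t₀, ⁅Y, Y'⁆ = 0)
    (ht₀g : ∀ Y ∈ t₀, ∀ i, ∀ Z ∈ g i, ⁅Y, Z⁆ ∈ g i)
    (ht₀skew : ∀ Y ∈ t₀, ∀ Z W : L, B ⁅Y, Z⁆ W = -B Z ⁅Y, W⁆)
    (s : LieSubalgebra ℝ L)
    -- `𝔰` projects surjectively onto `𝔞 ⊕ 𝔫` along `𝔨 ⊇ 𝔱₀`
    (hsurj : ∀ W ∈ (a ⊔ (⨆ i, g i) : Submodule ℝ L), ∃ Y ∈ t₀, Y + W ∈ s) :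
    (⨆ i, g i : Submodule ℝ L) ≤ s.toSubmodule := by
  refine iSup_le fun i Z hZ => ?_
  obtain ⟨H, hH⟩ := hlam1 i
  obtain ⟨Y₁, hY₁, hY₁H⟩ := hsurj H (Submodule.mem_sup_left H.2)
  have hskew : LinearMap.IsSkewAdjoint B (LieAlgebra.ad ℝ L Y₁) := fun Z W => by
    change B ⁅Y₁, Z⁆ W = B Z (-⁅Y₁, W⁆)
    rw [map_neg, ht₀skew Y₁ hY₁]
  obtain ⟨W, hW, rfl⟩ :=
    hskew.exists_add_apply_eq hBpos (fun W hW => ht₀g Y₁ hY₁ i W hW) hZ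
  obtain ⟨Y₂, hY₂, hY₂W⟩ := hsurj W (Submodule.mem_sup_right (Submodule.mem_iSup_of_mem i hW))
  exact s.add_lie_mem_of_lie_eq_self (ht₀ab Y₁ hY₁ Y₂ hY₂) (ht₀a Y₂ hY₂ H H.2)
    (by rw [hroot i H W hW, hH, one_smul]) hY₁H hY₂W

/-- If a Lie subalgebra `𝔰 ⊆ 𝔱₀ ⊕ 𝔞 ⊕ 𝔫` projects surjectively onto `𝔞 ⊕ 𝔫` along `𝔨`,
then `𝔰` contains the whole nilpotent part `𝔫 = ⨁_{α ∈ Σ⁺} 𝔤_α`. -/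
theorem stmt6 {L : Type*} [LieRing L] [LieAlgebra ℝ L] [Module.Finite ℝ L]
    -- the inner product `B_θ`
    (B : L →ₗ[ℝ] L →ₗ[ℝ] ℝ)
    (hBsymm : ∀ X Y : L, B X Y = B Y X)
    (hBpos : ∀ X : L, X ≠ 0 → 0 < B X X)
    (a t₀ : Submodule ℝ L)
    {ι : Type*} (g : ι → Submodule ℝ L)
    -- the positive restricted roots and root spaces
    (lam : ι → (↥a →ₗ[ℝ] ℝ))
    (hroot : ∀ i, ∀ H : ↥a, ∀ Z ∈ g i, ⁅(H : L), Z⁆ = lam i H • Z)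
    (hlam1 : ∀ i, ∃ H : ↥a, lam i H = 1)
    -- `𝔱₀ ⊆ 𝔨₀ = Z_𝔨(𝔞)`: abelian, commutes with `𝔞`, preserves each root space,
    -- and acts skew-symmetrically with respect to `B_θ`
    (ht₀a : ∀ Y ∈ t₀, ∀ H ∈ a, ⁅Y, H⁆ = 0)
    (ht₀ab : ∀ Y ∈ t₀, ∀ Y' ∈ t₀, ⁅Y, Y'⁆ = 0)
    (ht₀g : ∀ Y ∈ t₀, ∀ i, ∀ Z ∈ g i, ⁅Y, Z⁆ ∈ g i)
    (ht₀skew : ∀ Y ∈ t₀, ∀ Z W : L, B ⁅Y, Z⁆ W = -B Z ⁅Y, W⁆)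
    (s : LieSubalgebra ℝ L)
    (hsub : (s : Set L) ⊆ ((t₀ ⊔ a ⊔ (⨆ i, g i) : Submodule ℝ L) : Set L))
    -- `𝔰` projects surjectively onto `𝔞 ⊕ 𝔫` along `𝔨 ⊇ 𝔱₀`
    (hsurj : ∀ W ∈ (a ⊔ (⨆ i, g i) : Submodule ℝ L), ∃ Y ∈ t₀, Y + W ∈ s) :
    (⨆ i, g i : Submodule ℝ L) ≤ s.toSubmodule :=
  stmt6_general B hBpos a t₀ g lam hroot hlam1 ht₀a ht₀ab ht₀g ht₀skew s hsurj
end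

section
/- Let M ≅ A⋉N be the solvable model of a symmetric space of noncompact type, where the left-invariant metric on 𝔞 ⊕ 𝔫 is given by ⟨X,Y⟩_{AN} = ⟨X_𝔞, Y_𝔞⟩_{B_θ} + ½⟨X_𝔫, Y_𝔫⟩_{B_θ}. Then for all X, Y, Z ∈ 𝔞 ⊕ 𝔫, the Levi-Civita connection satisfies ⟨∇_X Y, Z⟩_{AN} = ¼ B_θ([X,Y] + [θX, Y] − [X, θY], Z). -/
/-!
Every bracket of `𝔞 ⊕ 𝔫` lies in `𝔫`, and on `𝔫` the metric is `½ B_θ` (using `𝔞 ⊥ 𝔫`), so the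
Koszul formula reads `4⟨∇_X Y, Z⟩ = B_θ([X,Y],Z) − B_θ([Y,Z],X) + B_θ([Z,X],Y)`. Invariance of the
Killing form together with `θ² = 1` turns the last two terms into `−B_θ([X,θY],Z)` and
`B_θ([θX,Y],Z)`.
-/

section Involution

variable {R L : Type*} [CommRing R] [LieRing L] [LieAlgebra R L]
  {θ : L ≃ₗ⁅R⁆ L}

theorem killingForm_apply_involution_comm (hθ : ∀ X, θ (θ X) = X) (X Y : L) :
    killingForm R L X (θ Y) = killingForm R L Y (θ X) := by
  rw [← LieAlgebra.killingForm_of_equiv_apply θ X (θ Y), hθ]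
  exact LieModule.traceForm_comm R L L (θ X) Y

theorem killingForm_lie_involution_left (hθ : ∀ X, θ (θ X) = X) (X Y Z : L) :
    killingForm R L ⁅θ X, Y⁆ (θ Z) = killingForm R L ⁅Z, X⁆ (θ Y) :=
  calc killingForm R L ⁅θ X, Y⁆ (θ Z)
      = -killingForm R L Y (θ ⁅X, Z⁆) := by
        rw [LieModule.traceForm_apply_lie_apply', LieEquiv.map_lie]
    _ = killingForm R L ⁅Z, X⁆ (θ Y) := by
        rw [killingForm_apply_involution_comm hθ, ← lie_skew X Z, map_neg, LinearMap.neg_apply,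
          neg_neg]

theorem killingForm_lie_involution_right (hθ : ∀ X, θ (θ X) = X) (X Y Z : L) :
    killingForm R L ⁅X, θ Y⁆ (θ Z) = killingForm R L ⁅Y, Z⁆ (θ X) :=
  calc killingForm R L ⁅X, θ Y⁆ (θ Z)
      = killingForm R L X (θ ⁅Y, Z⁆) := by
        rw [← lie_skew, map_neg, LinearMap.neg_apply, LieModule.traceForm_apply_lie_apply',
          neg_neg, LieEquiv.map_lie]
    _ = killingForm R L ⁅Y, Z⁆ (θ X) := killingForm_apply_involution_comm hθ X _

theorem killingForm_koszul (hθ : ∀ X, θ (θ X) = X) (X Y Z : L) :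
    killingForm R L (⁅X, Y⁆ + ⁅θ X, Y⁆ - ⁅X, θ Y⁆) (θ Z)
      = killingForm R L ⁅X, Y⁆ (θ Z) + killingForm R L ⁅Z, X⁆ (θ Y)
        - killingForm R L ⁅Y, Z⁆ (θ X) := by
  rw [map_sub, map_add, LinearMap.sub_apply, LinearMap.add_apply,
    killingForm_lie_involution_left hθ, killingForm_lie_involution_right hθ]

end Involution

theorem lie_mem_of_mem_sup {R L : Type*} [CommRing R] [LieRing L] [LieAlgebra R L]
    {a n : Submodule R L} (haab : ∀ H ∈ a, ∀ H' ∈ a, ⁅H, H'⁆ = 0)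
    (han : ∀ H ∈ a, ∀ X ∈ n, ⁅H, X⁆ ∈ n) (hnn : ∀ X ∈ n, ∀ Y ∈ n, ⁅X, Y⁆ ∈ n)
    {V W : L} (hV : V ∈ a ⊔ n) (hW : W ∈ a ⊔ n) : ⁅V, W⁆ ∈ n := by
  obtain ⟨H, hH, X, hX, rfl⟩ := Submodule.mem_sup.mp hV
  obtain ⟨H', hH', Y, hY, rfl⟩ := Submodule.mem_sup.mp hW
  have hXH' : ⁅X, H'⁆ ∈ n := by
    rw [← lie_skew]
    exact n.neg_mem (han H' hH' X hX)
  rw [add_lie, lie_add, lie_add, haab H hH H' hH', zero_add]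
  exact n.add_mem (han H hH Y hY) (n.add_mem hXH' (hnn X hX Y hY))

theorem killingForm_proj_eq_half_of_mem {K L : Type*} [Field K] [LieRing L] [LieAlgebra K L]
    {θ : L ≃ₗ⁅K⁆ L} (hθ : ∀ X, θ (θ X) = X) {a n : Submodule K L}
    (horth : ∀ H ∈ a, ∀ X ∈ n, -(killingForm K L H (θ X)) = 0) {πa πn : L →ₗ[K] L}
    (hπa : ∀ H ∈ a, πa H = H ∧ πn H = 0) (hπn : ∀ X ∈ n, πa X = 0 ∧ πn X = X)
    {W V : L} (hW : W ∈ n) (hV : V ∈ a ⊔ n) :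
    -(killingForm K L (πa W) (θ (πa V))) + (1 / 2) * -(killingForm K L (πn W) (θ (πn V)))
      = (1 / 2) * -(killingForm K L W (θ V)) := by
  obtain ⟨H, hH, X, hX, rfl⟩ := Submodule.mem_sup.mp hV
  have hWH : killingForm K L W (θ H) = 0 := by
    rw [killingForm_apply_involution_comm hθ, ← neg_eq_zero]
    exact horth H hH W hW
  simp only [(hπn W hW).1, (hπn W hW).2, map_add, (hπa H hH).2, (hπn X hX).2, map_zero,
    LinearMap.zero_apply, neg_zero, zero_add, hWH]

theorem stmt17_general {L : Type*} [LieRing L] [LieAlgebra ℝ L]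
    (θ : L ≃ₗ⁅ℝ⁆ L) (hθ : ∀ X, θ (θ X) = X)
    (a n : Submodule ℝ L)
    (haab : ∀ H ∈ a, ∀ H' ∈ a, ⁅H, H'⁆ = 0)
    (han : ∀ H ∈ a, ∀ X ∈ n, ⁅H, X⁆ ∈ n)
    (hnn : ∀ X ∈ n, ∀ Y ∈ n, ⁅X, Y⁆ ∈ n)
    -- `𝔞` and `𝔫` are `B_θ`-orthogonal
    (horth : ∀ H ∈ a, ∀ X ∈ n, -(killingForm ℝ L H (θ X)) = 0)
    -- projections onto the `𝔞`- and `𝔫`-components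
    (πa πn : L →ₗ[ℝ] L)
    (hπa : ∀ H ∈ a, πa H = H ∧ πn H = 0)
    (hπn : ∀ X ∈ n, πa X = 0 ∧ πn X = X)
    (innAN : L → L → ℝ)
    (hinnAN : ∀ X Y : L, innAN X Y
      = -(killingForm ℝ L (πa X) (θ (πa Y))) + (1 / 2) * -(killingForm ℝ L (πn X) (θ (πn Y))))
    (nabla : L → L → L)
    -- the Koszul formula for left-invariant vector fields
    (hKoszul : ∀ X ∈ a ⊔ n, ∀ Y ∈ a ⊔ n, ∀ Z ∈ a ⊔ n,
      2 * innAN (nabla X Y) Z = innAN ⁅X, Y⁆ Z - innAN ⁅Y, Z⁆ X + innAN ⁅Z, X⁆ Y) :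
    ∀ X ∈ a ⊔ n, ∀ Y ∈ a ⊔ n, ∀ Z ∈ a ⊔ n,
      innAN (nabla X Y) Z
        = (1 / 4) * -(killingForm ℝ L (⁅X, Y⁆ + ⁅θ X, Y⁆ - ⁅X, θ Y⁆) (θ Z)) := by
  intro X hX Y hY Z hZ
  have innAN_bracket : ∀ {U V W : L}, U ∈ a ⊔ n → V ∈ a ⊔ n → W ∈ a ⊔ n →
      innAN ⁅U, V⁆ W = (1 / 2) * -(killingForm ℝ L ⁅U, V⁆ (θ W)) := fun hU hV hW => by
    rw [hinnAN, killingForm_proj_eq_half_of_mem hθ horth hπa hπn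
      (lie_mem_of_mem_sup haab han hnn hU hV) hW]
  have hK := hKoszul X hX Y hY Z hZ
  rw [innAN_bracket hX hY hZ, innAN_bracket hY hZ hX, innAN_bracket hZ hX hY] at hK
  rw [killingForm_koszul hθ]
  linarith

/-- In the solvable model `AN` of a symmetric space of noncompact type, the Levi-Civita
connection of the left-invariant metric
`⟨X,Y⟩_{AN} = ⟨X_𝔞,Y_𝔞⟩_{B_θ} + ½⟨X_𝔫,Y_𝔫⟩_{B_θ}` satisfies
`⟨∇_X Y, Z⟩_{AN} = ¼ B_θ([X,Y] + [θX,Y] − [X,θY], Z)`. -/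
theorem stmt17 {L : Type*} [LieRing L] [LieAlgebra ℝ L] [Module.Finite ℝ L]
    (θ : L ≃ₗ⁅ℝ⁆ L) (hθ : ∀ X, θ (θ X) = X)
    (hpos : ∀ X : L, X ≠ 0 → 0 < -(killingForm ℝ L X (θ X)))
    (a n : Submodule ℝ L)
    (haab : ∀ H ∈ a, ∀ H' ∈ a, ⁅H, H'⁆ = 0)
    (han : ∀ H ∈ a, ∀ X ∈ n, ⁅H, X⁆ ∈ n)
    (hnn : ∀ X ∈ n, ∀ Y ∈ n, ⁅X, Y⁆ ∈ n)
    -- `𝔞` and `𝔫` are `B_θ`-orthogonal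
    (horth : ∀ H ∈ a, ∀ X ∈ n, -(killingForm ℝ L H (θ X)) = 0)
    -- projections onto the `𝔞`- and `𝔫`-components
    (πa πn : L →ₗ[ℝ] L)
    (hπa : ∀ H ∈ a, πa H = H ∧ πn H = 0)
    (hπn : ∀ X ∈ n, πa X = 0 ∧ πn X = X)
    (innAN : L → L → ℝ)
    (hinnAN : ∀ X Y : L, innAN X Y
      = -(killingForm ℝ L (πa X) (θ (πa Y))) + (1 / 2) * -(killingForm ℝ L (πn X) (θ (πn Y))))
    (nabla : L → L → L)
    (hnabla_mem : ∀ X ∈ a ⊔ n, ∀ Y ∈ a ⊔ n, nabla X Y ∈ a ⊔ n)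
    -- the Koszul formula for left-invariant vector fields
    (hKoszul : ∀ X ∈ a ⊔ n, ∀ Y ∈ a ⊔ n, ∀ Z ∈ a ⊔ n,
      2 * innAN (nabla X Y) Z = innAN ⁅X, Y⁆ Z - innAN ⁅Y, Z⁆ X + innAN ⁅Z, X⁆ Y) :
    ∀ X ∈ a ⊔ n, ∀ Y ∈ a ⊔ n, ∀ Z ∈ a ⊔ n,
      innAN (nabla X Y) Z
        = (1 / 4) * -(killingForm ℝ L (⁅X, Y⁆ + ⁅θ X, Y⁆ - ⁅X, θ Y⁆) (θ Z)) :=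
  stmt17_general θ hθ a n haab han hnn horth πa πn hπa hπn innAN hinnAN nabla hKoszul
end
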